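/- arXiv:1412.2271 — 2 statements merged into one kernel-verified Lean document; each statement's English description precedes it below -/
import Mathlib

section
/- Let d = 3, q ≥ 2, and l_1 = 0, l_2 ∈ ℤ_q a unit, and let 𝒦 = {β = (b_{i,j}) ∈ GL_2(ℤ) : l_2 + ∏_k(t+l_k)^{b_{k,1}} − ∏_k(t+l_k)^{b_{k,2}} = 0 and −l_2 + ∏_k(t+l_k)^{b_{k,2}} − ∏_k(t+l_k)^{b_{k,1}} = 0 hold in R_3(ℤ_q), and likewise for β^{−1}}. Then: (i) if q > 2 and l_2 = −1 in ℤ_q, 𝒦 is the two-element group generated by [[1, 0], [−1, −1]]; (ii) if q > 2 and l_2 = 1 in ℤ_q, 𝒦 is the two-element group generated by [[−1, −1], [0, 1]]; (iii) if q = 2 (so l_2 = 1), 𝒦 is isomorphic to the dihedral group of order 6 and consists of the identity together with the five matrices [[1,0],[−1,−1]], [[−1,−1],[0,1]], [[−1,−1],[1,0]], [[0,1],[−1,−1]], and [[0,1],[1,0]]; (iv) if q > 2 and l_2 ∉ {1, −1} in ℤ_q, 𝒦 is trivial. -/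
open Polynomial

/-- The multiplicative set of `ℤ_q[t]` generated by the polynomials `t + l i`. -/
noncomputable def dlSub (q d : ℕ) (l : Fin (d-1) → ZMod q) : Submonoid (Polynomial (ZMod q)) :=
  Submonoid.closure {p | ∃ i : Fin (d-1), p = X + C (l i)}

/-- The ring `R_d(ℤ_q) = ℤ_q[t, (t+l_1)⁻¹, …, (t+l_{d-1})⁻¹]`, realized as the localization of
`ℤ_q[t]` at the multiplicative set generated by the `t + l i`. -/
abbrev Rd (q d : ℕ) (l : Fin (d-1) → ZMod q) := Localization (dlSub q d l)

/-- The image of `t + l i` in `R_d(ℤ_q)`, as a unit. -/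
noncomputable def tU (q d : ℕ) (l : Fin (d-1) → ZMod q) (i : Fin (d-1)) : (Rd q d l)ˣ :=
  (IsLocalization.map_units (M := dlSub q d l) (Rd q d l)
    ⟨X + C (l i), Submonoid.subset_closure ⟨i, rfl⟩⟩).unit

/-- The monomial `∏ i (t + l i) ^ (v i)`, as a unit of `R_d(ℤ_q)`. -/
noncomputable def monU (q d : ℕ) (l : Fin (d-1) → ZMod q) (v : Fin (d-1) → ℤ) : (Rd q d l)ˣ :=
  ∏ i, tU q d l i ^ (v i)

/-- The condition on a `(d-1) × (d-1)` integer matrix `β = (b k i)` that, for all `i ≠ j`,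
`(l j - l i) + ∏ k (t + l k)^(b k i) - ∏ k (t + l k)^(b k j) = 0` holds in `R_d(ℤ_q)`. -/
def kCond (q d : ℕ) (l : Fin (d-1) → ZMod q) (β : Matrix (Fin (d-1)) (Fin (d-1)) ℤ) : Prop :=
  ∀ i j : Fin (d-1), i ≠ j →
    algebraMap (Polynomial (ZMod q)) (Rd q d l) (C (l j - l i))
      + (monU q d l (fun k => β k i) : Rd q d l)
      - (monU q d l (fun k => β k j) : Rd q d l) = 0

/-- The set `𝒦` of invertible integer matrices `β` such that the defining identities hold
both for the entries of `β` and for the entries of `β⁻¹`. -/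
def kSet (q d : ℕ) (l : Fin (d-1) → ZMod q) : Set (Matrix.GeneralLinearGroup (Fin (d-1)) ℤ) :=
  {β | kCond q d l ↑β ∧ kCond q d l ↑(β⁻¹)}

/-!
Write `w = l₂`, `u = t` and `v = t + w`. For `β = [[a, c], [b, d]]` the defining identities say
that `w + u^a v^b = u^c v^d` in `R₃(ℤ_q)`. Multiplying by a monomial clears the denominators and
gives an identity in `ℤ_q[t]`. Evaluating it at `t = 0`, where `u` vanishes and `v` is the unit
`w`, shows that the minimum of `a`, `c`, `0` is attained at least twice; evaluating at `t = -w`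
gives the same for `b`, `d`, `0`. So both rows of `β` lie on the tropical line, and together with
`det β = ±1` this leaves six matrices. For each of them the identity is an explicit polynomial
identity, which holds exactly when `w = -1`, `w = 1` or `2 = 0` as listed, and the resulting set
is closed under inversion. For `q = 2` all six occur, and they form the image of a faithful
representation of the dihedral group of order 6.
-/

section UnitEquation

variable {S R : Type*} [CommRing S] [CommRing R]

structure IsUnitEmbedding (φ : S[X] →+* R) (w : S) (u v : Rˣ) : Prop where
  injective : Function.Injective φ
  val_fst : (u : R) = φ X
  val_snd : (v : R) = φ (X + C w)

def UnitEq (φ : S[X] →+* R) (w : S) (u v : Rˣ) (a b c d : ℤ) : Prop :=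
  φ (C w) + ((u ^ a * v ^ b : Rˣ) : R) - ((u ^ c * v ^ d : Rˣ) : R) = 0

/-- The minimum of `x`, `y` and `0` is attained at least twice. -/
def OnTropicalLine (x y : ℤ) : Prop :=
  x = y ∧ x ≤ 0 ∨ x = 0 ∧ 0 ≤ y ∨ y = 0 ∧ 0 ≤ x

theorem exists_minimal_nonneg_shift (x y : ℤ) :
    ∃ A : ℕ, 0 ≤ x + A ∧ 0 ≤ y + A ∧ (A = 0 ∨ x + A = 0 ∨ y + A = 0) :=
  ⟨(-x).toNat ⊔ (-y).toNat, by omega⟩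

theorem onTropicalLine_of_zero_pow {T : Type*} [CommRing T] [Nontrivial T] {e e₁ e₂ : T}
    (he : IsUnit e) (he₁ : IsUnit e₁) (he₂ : IsUnit e₂) {x y : ℤ} {A : ℕ}
    (hx : 0 ≤ x + A) (hy : 0 ≤ y + A) (hA : A = 0 ∨ x + A = 0 ∨ y + A = 0)
    (h : (0 : T) ^ A * e + 0 ^ (x + A).toNat * e₁ - 0 ^ (y + A).toNat * e₂ = 0) :
    OnTropicalLine x y := by
  simp only [zero_pow_eq] at h
  by_contra hne
  unfold OnTropicalLine at hne
  rcases (by omega : A = 0 ∧ 0 < x ∧ 0 < y ∨ x + A = 0 ∧ 0 < A ∧ x < y ∨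
    y + A = 0 ∧ 0 < A ∧ y < x) with ⟨h0, h1, h2⟩ | ⟨h0, h1, h2⟩ | ⟨h0, h1, h2⟩
  · rw [if_pos h0, if_neg (by omega), if_neg (by omega)] at h
    exact he.ne_zero (by simpa using h)
  · rw [if_neg (by omega), if_pos (by omega), if_neg (by omega)] at h
    exact he₁.ne_zero (by simpa using h)
  · rw [if_neg (by omega), if_neg (by omega), if_pos (by omega)] at h
    exact he₂.ne_zero (by simpa using h)

theorem eq_of_rows_onTropicalLine {M : Matrix (Fin 2) (Fin 2) ℤ}
    (h₀ : OnTropicalLine (M 0 0) (M 0 1)) (h₁ : OnTropicalLine (M 1 0) (M 1 1))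
    (hdet : IsUnit M.det) :
    M = 1 ∨ M = !![1, 0; -1, -1] ∨ M = !![-1, -1; 0, 1] ∨ M = !![-1, -1; 1, 0] ∨
      M = !![0, 1; -1, -1] ∨ M = !![0, 1; 1, 0] := by
  rw [Matrix.det_fin_two, Int.isUnit_iff] at hdet
  rw [Matrix.eta_fin_two M, Matrix.one_fin_two]
  generalize M 0 0 = a, M 0 1 = c, M 1 0 = b, M 1 1 = d at *
  simp only [EmbeddingLike.apply_eq_iff_eq, Matrix.vecCons_inj, and_true]
  unfold OnTropicalLine at h₀ h₁
  rcases h₀ with ⟨rfl, h₀⟩ | ⟨rfl, h₀⟩ | ⟨rfl, h₀⟩ <;>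
    rcases h₁ with ⟨rfl, h₁⟩ | ⟨rfl, h₁⟩ | ⟨rfl, h₁⟩ <;>
    simp only [mul_zero, zero_mul, sub_zero, zero_sub, sub_self, neg_eq_iff_eq_neg, neg_neg,
      Int.mul_eq_one_iff_eq_one_or_neg_one, Int.mul_eq_neg_one_iff_eq_one_or_neg_one] at hdet <;>
    casesm* _ ∨ _, _ ∧ _ <;> subst_vars <;> first | (exfalso; omega) | decide

theorem Polynomial.two_eq_zero_of_two_eq_zero (h2 : (2 : S) = 0) : (2 : S[X]) = 0 := by
  rw [← map_ofNat C 2, h2, map_zero]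

variable {φ : S[X] →+* R} {w : S} {u v : Rˣ}

namespace IsUnitEmbedding

theorem unitEq_iff_poly (H : IsUnitEmbedding φ w u v) {a b c d : ℤ} {A B : ℕ}
    (ha : 0 ≤ a + A) (hb : 0 ≤ b + B) (hc : 0 ≤ c + A) (hd : 0 ≤ d + B) :
    UnitEq φ w u v a b c d ↔
      C w * (X ^ A * (X + C w) ^ B) + X ^ (a + A).toNat * (X + C w) ^ (b + B).toNat
        - X ^ (c + A).toNat * (X + C w) ^ (d + B).toNat = 0 := by
  have hmon : ∀ x y : ℤ, 0 ≤ x + A → 0 ≤ y + B →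
      ((u ^ x * v ^ y : Rˣ) : R) * ((u ^ (A : ℤ) * v ^ (B : ℤ) : Rˣ) : R)
        = φ (X ^ (x + A).toNat * (X + C w) ^ (y + B).toNat) := by
    intro x y hx hy
    obtain ⟨m, hm⟩ := Int.eq_ofNat_of_zero_le hx
    obtain ⟨n, hn⟩ := Int.eq_ofNat_of_zero_le hy
    rw [← Units.val_mul, mul_mul_mul_comm, ← zpow_add, ← zpow_add, hm, hn]
    simp [H.val_fst, H.val_snd]
  have hscale : φ (C w * (X ^ A * (X + C w) ^ B) + X ^ (a + A).toNat * (X + C w) ^ (b + B).toNat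
        - X ^ (c + A).toNat * (X + C w) ^ (d + B).toNat)
      = (φ (C w) + ((u ^ a * v ^ b : Rˣ) : R) - ((u ^ c * v ^ d : Rˣ) : R))
        * ((u ^ (A : ℤ) * v ^ (B : ℤ) : Rˣ) : R) := by
    rw [sub_mul, add_mul, hmon a b ha hb, hmon c d hc hd]
    simp [H.val_fst, H.val_snd]
  rw [UnitEq, ← (Units.mul_left_eq_zero (u ^ (A : ℤ) * v ^ (B : ℤ))), ← hscale,
    map_eq_zero_iff φ H.injective]

theorem eval_eq_zero (H : IsUnitEmbedding φ w u v) {a b c d : ℤ} (h : UnitEq φ w u v a b c d)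
    {A B : ℕ} (ha : 0 ≤ a + A) (hb : 0 ≤ b + B) (hc : 0 ≤ c + A) (hd : 0 ≤ d + B)
    (r : S) :
    r ^ A * (w * (r + w) ^ B) + r ^ (a + A).toNat * (r + w) ^ (b + B).toNat
        - r ^ (c + A).toNat * (r + w) ^ (d + B).toNat = 0 := by
  have := congrArg (eval r) ((H.unitEq_iff_poly ha hb hc hd).1 h)
  simp only [eval_add, eval_sub, eval_mul, eval_pow, eval_X, eval_C, eval_zero] at this
  linear_combination this

theorem onTropicalLine_fst (H : IsUnitEmbedding φ w u v) [Nontrivial S] (hw : IsUnit w)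
    {a b c d : ℤ} (h : UnitEq φ w u v a b c d) : OnTropicalLine a c := by
  obtain ⟨A, ha, hc, hA⟩ := exists_minimal_nonneg_shift a c
  obtain ⟨B, hb, hd, -⟩ := exists_minimal_nonneg_shift b d
  have h0 := H.eval_eq_zero h ha hb hc hd 0
  simp only [zero_add] at h0
  exact onTropicalLine_of_zero_pow (hw.mul (hw.pow B)) (hw.pow _) (hw.pow _) ha hc hA h0

theorem onTropicalLine_snd (H : IsUnitEmbedding φ w u v) [Nontrivial S] (hw : IsUnit w)
    {a b c d : ℤ} (h : UnitEq φ w u v a b c d) : OnTropicalLine b d := by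
  obtain ⟨A, ha, hc, -⟩ := exists_minimal_nonneg_shift a c
  obtain ⟨B, hb, hd, hB⟩ := exists_minimal_nonneg_shift b d
  have h0 := H.eval_eq_zero h ha hb hc hd (-w)
  simp only [neg_add_cancel] at h0
  have hw' := hw.neg
  refine onTropicalLine_of_zero_pow ((hw'.pow A).mul hw) (hw'.pow (a + A).toNat)
    (hw'.pow (c + A).toNat) hb hd hB ?_
  linear_combination h0

theorem unitEq_one_zero_zero_one (H : IsUnitEmbedding φ w u v) : UnitEq φ w u v 1 0 0 1 := by
  simp only [UnitEq, zpow_one, zpow_zero, mul_one, one_mul, H.val_fst, H.val_snd, map_add]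
  ring

theorem unitEq_one_neg_one_zero_neg_one_iff (H : IsUnitEmbedding φ w u v) :
    UnitEq φ w u v 1 (-1) 0 (-1) ↔ w = -1 := by
  rw [H.unitEq_iff_poly (A := 0) (B := 1) (by norm_num) (by norm_num) (by norm_num)
    (by norm_num)]
  simp only [Nat.cast_zero, Nat.cast_one, add_zero, neg_add_cancel, Int.toNat_zero, Int.toNat_one,
    pow_zero, pow_one, mul_one, one_mul]
  refine ⟨fun h => ?_, fun hw => ?_⟩
  · have h₁ := congrArg (eval (-w)) h
    simp only [eval_add, eval_sub, eval_mul, eval_C, eval_X, eval_one, eval_zero] at h₁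
    linear_combination -h₁
  · rw [hw, map_neg, map_one]
    ring

theorem unitEq_neg_one_zero_neg_one_one_iff (H : IsUnitEmbedding φ w u v) :
    UnitEq φ w u v (-1) 0 (-1) 1 ↔ w = 1 := by
  rw [H.unitEq_iff_poly (A := 1) (B := 0) (by norm_num) (by norm_num) (by norm_num)
    (by norm_num)]
  simp only [Nat.cast_zero, Nat.cast_one, add_zero, neg_add_cancel, Int.toNat_zero, Int.toNat_one,
    pow_zero, pow_one, mul_one, one_mul]
  refine ⟨fun h => ?_, fun hw => ?_⟩
  · have h₀ := congrArg (eval 0) h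
    simp only [eval_add, eval_sub, eval_mul, eval_C, eval_X, eval_one, eval_zero] at h₀
    linear_combination -h₀
  · rw [hw, map_one]
    ring

theorem unitEq_neg_one_one_neg_one_zero_iff (H : IsUnitEmbedding φ w u v) :
    UnitEq φ w u v (-1) 1 (-1) 0 ↔ w = 1 ∧ (2 : S) = 0 := by
  rw [H.unitEq_iff_poly (A := 1) (B := 0) (by norm_num) (by norm_num) (by norm_num)
    (by norm_num)]
  simp only [Nat.cast_zero, Nat.cast_one, add_zero, neg_add_cancel, Int.toNat_zero, Int.toNat_one,
    pow_zero, pow_one, mul_one, one_mul]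
  refine ⟨fun h => ?_, fun ⟨hw, h2⟩ => ?_⟩
  · have h₀ := congrArg (eval 0) h
    have h₁ := congrArg (eval (-w)) h
    simp only [eval_add, eval_sub, eval_mul, eval_C, eval_X, eval_one, eval_zero] at h₀ h₁
    obtain rfl : w = 1 := by linear_combination h₀
    exact ⟨rfl, by linear_combination -h₁⟩
  · rw [hw, map_one]
    linear_combination (X : S[X]) * two_eq_zero_of_two_eq_zero h2

theorem unitEq_zero_neg_one_one_neg_one_iff (H : IsUnitEmbedding φ w u v) :
    UnitEq φ w u v 0 (-1) 1 (-1) ↔ w = 1 ∧ (2 : S) = 0 := by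
  rw [H.unitEq_iff_poly (A := 0) (B := 1) (by norm_num) (by norm_num) (by norm_num)
    (by norm_num)]
  simp only [Nat.cast_zero, Nat.cast_one, add_zero, neg_add_cancel, Int.toNat_zero, Int.toNat_one,
    pow_zero, pow_one, mul_one, one_mul]
  refine ⟨fun h => ?_, fun ⟨hw, h2⟩ => ?_⟩
  · have h₀ := congrArg (eval 0) h
    have h₁ := congrArg (eval (-w)) h
    simp only [eval_add, eval_sub, eval_mul, eval_C, eval_X, eval_one, eval_zero] at h₀ h₁
    obtain rfl : w = -1 := by linear_combination h₁
    exact ⟨by linear_combination -h₀, by linear_combination h₀⟩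
  · rw [hw, map_one]
    linear_combination two_eq_zero_of_two_eq_zero h2

theorem unitEq_zero_one_one_zero_iff (H : IsUnitEmbedding φ w u v) (hw : IsUnit w) :
    UnitEq φ w u v 0 1 1 0 ↔ (2 : S) = 0 := by
  rw [H.unitEq_iff_poly (A := 0) (B := 0) (by norm_num) (by norm_num) (by norm_num)
    (by norm_num)]
  simp only [Nat.cast_zero, add_zero, Int.toNat_zero, Int.toNat_one, pow_zero, pow_one, mul_one,
    one_mul]
  refine ⟨fun h => ?_, fun h2 => ?_⟩
  · have h₀ := congrArg (eval 0) h
    simp only [eval_add, eval_sub, eval_C, eval_X, eval_zero] at h₀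
    exact hw.mul_left_eq_zero.1 (by linear_combination h₀)
  · linear_combination C w * two_eq_zero_of_two_eq_zero h2

theorem unitEq_iff (H : IsUnitEmbedding φ w u v) [Nontrivial S] (hw : IsUnit w)
    {M : Matrix (Fin 2) (Fin 2) ℤ} (hM : IsUnit M.det) :
    UnitEq φ w u v (M 0 0) (M 1 0) (M 0 1) (M 1 1) ↔
      M = 1 ∨ (M = !![1, 0; -1, -1] ∧ w = -1) ∨ (M = !![-1, -1; 0, 1] ∧ w = 1) ∨
      (M = !![-1, -1; 1, 0] ∧ w = 1 ∧ (2 : S) = 0) ∨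
      (M = !![0, 1; -1, -1] ∧ w = 1 ∧ (2 : S) = 0) ∨
      (M = !![0, 1; 1, 0] ∧ (2 : S) = 0) := by
  constructor
  · intro h
    rcases eq_of_rows_onTropicalLine (H.onTropicalLine_fst hw h) (H.onTropicalLine_snd hw h)
      hM with rfl | rfl | rfl | rfl | rfl | rfl <;>
    simp [H.unitEq_one_neg_one_zero_neg_one_iff, H.unitEq_neg_one_zero_neg_one_one_iff,
      H.unitEq_neg_one_one_neg_one_zero_iff, H.unitEq_zero_neg_one_one_neg_one_iff,
      H.unitEq_zero_one_one_zero_iff hw] at h ⊢ <;> tauto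
  · rintro (rfl | ⟨rfl, h⟩ | ⟨rfl, h⟩ | ⟨rfl, h⟩ | ⟨rfl, h⟩ | ⟨rfl, h⟩) <;>
    simp [H.unitEq_one_zero_zero_one, H.unitEq_one_neg_one_zero_neg_one_iff,
      H.unitEq_neg_one_zero_neg_one_one_iff, H.unitEq_neg_one_one_neg_one_zero_iff,
      H.unitEq_zero_neg_one_one_neg_one_iff, H.unitEq_zero_one_one_zero_iff hw] <;> tauto

end IsUnitEmbedding

end UnitEquation


theorem injective_algebraMap_Rd (q d : ℕ) (l : Fin (d-1) → ZMod q) :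
    Function.Injective (algebraMap (ZMod q)[X] (Rd q d l)) := by
  refine IsLocalization.injective (M := dlSub q d l) _ ?_
  rw [dlSub, Submonoid.closure_le]
  rintro p ⟨i, rfl⟩
  exact (monic_X_add_C (l i)).mem_nonZeroDivisors

theorem val_tU (q d : ℕ) (l : Fin (d-1) → ZMod q) (i : Fin (d-1)) :
    (tU q d l i : Rd q d l) = algebraMap (ZMod q)[X] (Rd q d l) (X + C (l i)) :=
  IsUnit.unit_spec _

section Rank2

variable {q : ℕ} {l : Fin 2 → ZMod q}

theorem isUnitEmbedding_Rd (hl0 : l 0 = 0) :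
    IsUnitEmbedding (algebraMap (ZMod q)[X] (Rd q 3 l)) (l 1) (tU q 3 l 0) (tU q 3 l 1) where
  injective := injective_algebraMap_Rd q 3 l
  val_fst := by rw [val_tU, hl0, map_zero, add_zero]
  val_snd := val_tU q 3 l 1

theorem kCond_iff_unitEq (hl0 : l 0 = 0) (M : Matrix (Fin 2) (Fin 2) ℤ) :
    kCond q 3 l M ↔ UnitEq (algebraMap (ZMod q)[X] (Rd q 3 l)) (l 1) (tU q 3 l 0) (tU q 3 l 1)
      (M 0 0) (M 1 0) (M 0 1) (M 1 1) := by
  have hmon (v : Fin 2 → ℤ) : monU q 3 l v = tU q 3 l 0 ^ v 0 * tU q 3 l 1 ^ v 1 :=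
    Fin.prod_univ_two _
  show (∀ i j : Fin 2, i ≠ j → _) ↔ _
  simp only [Fin.forall_fin_two, ne_eq, not_true_eq_false, false_imp_iff, zero_ne_one,
    one_ne_zero, not_false_eq_true, true_imp_iff, true_and, and_true, hmon, hl0, sub_zero,
    zero_sub, map_neg, UnitEq, Units.val_mul]
  exact ⟨And.left, fun h => ⟨h, by linear_combination -h⟩⟩

theorem kCond_iff (hq : 2 ≤ q) (hl0 : l 0 = 0) (hw : IsUnit (l 1))
    {M : Matrix (Fin 2) (Fin 2) ℤ} (hM : IsUnit M.det) :
    kCond q 3 l M ↔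
      M = 1 ∨ (M = !![1, 0; -1, -1] ∧ l 1 = -1) ∨ (M = !![-1, -1; 0, 1] ∧ l 1 = 1) ∨
        (M = !![-1, -1; 1, 0] ∧ l 1 = 1 ∧ (2 : ZMod q) = 0) ∨
        (M = !![0, 1; -1, -1] ∧ l 1 = 1 ∧ (2 : ZMod q) = 0) ∨
        (M = !![0, 1; 1, 0] ∧ (2 : ZMod q) = 0) := by
  have : Fact (1 < q) := ⟨hq⟩
  rw [kCond_iff_unitEq hl0]
  exact (isUnitEmbedding_Rd hl0).unitEq_iff hw hM

theorem kCond_inv (hq : 2 ≤ q) (hl0 : l 0 = 0) (hw : IsUnit (l 1))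
    {β : Matrix.GeneralLinearGroup (Fin 2) ℤ} (h : kCond q 3 l β) : kCond q 3 l ↑β⁻¹ := by
  rw [kCond_iff hq hl0 hw (Matrix.isUnits_det_units β)] at h
  rw [kCond_iff hq hl0 hw (Matrix.isUnits_det_units β⁻¹), Matrix.GeneralLinearGroup.coe_inv]
  rcases h with h | ⟨h, hc⟩ | ⟨h, hc⟩ | ⟨h, hc⟩ | ⟨h, hc⟩ | ⟨h, hc⟩ <;> rw [h]
  · simp
  · rw [Matrix.inv_eq_left_inv (B := !![1, 0; -1, -1]) (by decide)]; tauto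
  · rw [Matrix.inv_eq_left_inv (B := !![-1, -1; 0, 1]) (by decide)]; tauto
  · rw [Matrix.inv_eq_left_inv (B := !![0, 1; -1, -1]) (by decide)]; tauto
  · rw [Matrix.inv_eq_left_inv (B := !![-1, -1; 1, 0]) (by decide)]; tauto
  · rw [Matrix.inv_eq_left_inv (B := !![0, 1; 1, 0]) (by decide)]; tauto

theorem mem_kSet_iff (hq : 2 ≤ q) (hl0 : l 0 = 0) (hw : IsUnit (l 1))
    (β : Matrix.GeneralLinearGroup (Fin 2) ℤ) : β ∈ kSet q 3 l ↔ kCond q 3 l β :=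
  ⟨And.left, fun h => ⟨h, kCond_inv hq hl0 hw h⟩⟩

end Rank2

def dihedralRot : Matrix.GeneralLinearGroup (Fin 2) ℤ :=
  ⟨!![-1, -1; 1, 0], !![0, 1; -1, -1], by decide, by decide⟩

def dihedralRefl : Matrix.GeneralLinearGroup (Fin 2) ℤ :=
  ⟨!![1, 0; -1, -1], !![1, 0; -1, -1], by decide, by decide⟩

def dihedralToGL : DihedralGroup 3 →* Matrix.GeneralLinearGroup (Fin 2) ℤ where
  toFun
    | .r i => dihedralRot ^ i.val
    | .sr i => dihedralRefl * dihedralRot ^ i.val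
  map_one' := by decide
  map_mul' := by decide

theorem dihedralToGL_injective : Function.Injective dihedralToGL :=
  (injective_iff_map_eq_one dihedralToGL).2 (by decide)

theorem mem_range_dihedralToGL_iff (γ : Matrix.GeneralLinearGroup (Fin 2) ℤ) :
    γ ∈ dihedralToGL.range ↔
      (γ : Matrix (Fin 2) (Fin 2) ℤ) = 1 ∨
        (γ : Matrix (Fin 2) (Fin 2) ℤ) = !![1, 0; -1, -1] ∨
        (γ : Matrix (Fin 2) (Fin 2) ℤ) = !![-1, -1; 0, 1] ∨
        (γ : Matrix (Fin 2) (Fin 2) ℤ) = !![-1, -1; 1, 0] ∨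
        (γ : Matrix (Fin 2) (Fin 2) ℤ) = !![0, 1; -1, -1] ∨
        (γ : Matrix (Fin 2) (Fin 2) ℤ) = !![0, 1; 1, 0] := by
  constructor
  · rintro ⟨x, rfl⟩
    revert x
    decide
  · rintro (h | h | h | h | h | h)
    · exact ⟨.r 0, Units.ext (by rw [h]; decide)⟩
    · exact ⟨.sr 0, Units.ext (by rw [h]; decide)⟩
    · exact ⟨.sr 1, Units.ext (by rw [h]; decide)⟩
    · exact ⟨.r 1, Units.ext (by rw [h]; decide)⟩
    · exact ⟨.r 2, Units.ext (by rw [h]; decide)⟩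
    · exact ⟨.sr 2, Units.ext (by rw [h]; decide)⟩

/-- Theorem 3.3 (case `d = 3`).  For `𝒦` the group of matrices `β ∈ GL_2(ℤ)` satisfying
the defining identities (for `β` and `β⁻¹`) in `R_3(ℤ_q)`:
(i) if `q > 2` and `l_2 = -1`, `𝒦` is the two-element group generated by `[[1,0],[-1,-1]]`;
(ii) if `q > 2` and `l_2 = 1`, `𝒦` is the two-element group generated by `[[-1,-1],[0,1]]`;
(iii) if `q = 2`, `𝒦` is isomorphic to the dihedral group of order `6`, consisting of the
identity and the five listed matrices;
(iv) if `q > 2` and `l_2 ∉ {1, -1}`, `𝒦` is trivial. -/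
theorem statement7 (q : ℕ) (hq : 2 ≤ q) (l : Fin (3-1) → ZMod q)
    (hl0 : l 0 = 0) (hl2 : IsUnit (l 1)) :
    (2 < q → l 1 = -1 →
      kSet q 3 l = {β : Matrix.GeneralLinearGroup (Fin (3-1)) ℤ | (β : Matrix (Fin (3-1)) (Fin (3-1)) ℤ) = 1 ∨
        (β : Matrix (Fin (3-1)) (Fin (3-1)) ℤ) = !![(1:ℤ), 0; -1, -1]}) ∧
    (2 < q → l 1 = 1 →
      kSet q 3 l = {β : Matrix.GeneralLinearGroup (Fin (3-1)) ℤ | (β : Matrix (Fin (3-1)) (Fin (3-1)) ℤ) = 1 ∨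
        (β : Matrix (Fin (3-1)) (Fin (3-1)) ℤ) = !![(-1:ℤ), -1; 0, 1]}) ∧
    (q = 2 →
      kSet q 3 l = {β : Matrix.GeneralLinearGroup (Fin (3-1)) ℤ | (β : Matrix (Fin (3-1)) (Fin (3-1)) ℤ) = 1 ∨
          (β : Matrix (Fin (3-1)) (Fin (3-1)) ℤ) = !![(1:ℤ), 0; -1, -1] ∨
          (β : Matrix (Fin (3-1)) (Fin (3-1)) ℤ) = !![(-1:ℤ), -1; 0, 1] ∨
          (β : Matrix (Fin (3-1)) (Fin (3-1)) ℤ) = !![(-1:ℤ), -1; 1, 0] ∨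
          (β : Matrix (Fin (3-1)) (Fin (3-1)) ℤ) = !![(0:ℤ), 1; -1, -1] ∨
          (β : Matrix (Fin (3-1)) (Fin (3-1)) ℤ) = !![(0:ℤ), 1; 1, 0]} ∧
      ∃ K : Subgroup (Matrix.GeneralLinearGroup (Fin (3-1)) ℤ),
        (K : Set (Matrix.GeneralLinearGroup (Fin (3-1)) ℤ)) = kSet q 3 l ∧
        Nonempty (K ≃* DihedralGroup 3)) ∧
    (2 < q → l 1 ≠ 1 → l 1 ≠ -1 → kSet q 3 l = {1}) := by
  have hK (β : Matrix.GeneralLinearGroup (Fin 2) ℤ) := (mem_kSet_iff hq hl0 hl2 β).trans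
    (kCond_iff hq hl0 hl2 (Matrix.isUnits_det_units β))
  have htwo (hq2 : 2 < q) : (2 : ZMod q) ≠ 0 ∧ (-1 : ZMod q) ≠ 1 := by
    have : Fact (2 < q) := ⟨hq2⟩
    exact ⟨fun h => ZMod.neg_one_ne_one (by linear_combination -h), ZMod.neg_one_ne_one⟩
  refine ⟨fun hq2 hw => ?_, fun hq2 hw => ?_, fun hq2 => ?_, fun hq2 hw₁ hw₂ => ?_⟩
  · ext β
    simp [hK, hw, htwo hq2]
  · ext β
    simp [hK, hw, htwo hq2, (htwo hq2).2.symm]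
  · subst hq2
    have hw : l 1 = 1 := (by decide : ∀ x : ZMod 2, IsUnit x → x = 1) _ hl2
    have h2 : (2 : ZMod 2) = 0 := rfl
    refine ⟨?_, dihedralToGL.range, ?_,
      ⟨(MonoidHom.ofInjective dihedralToGL_injective).symm⟩⟩
    · ext β
      simp [hK, hw, h2]
    · ext β
      rw [SetLike.mem_coe, mem_range_dihedralToGL_iff, hK]
      simp [hw, h2]
  · ext β
    simp [hK, hw₁, hw₂, htwo hq2]
end

section
/- Let d ≥ 3, q ≥ 2, and l_1 = 0, l_2, …, l_{d−1} ∈ ℤ_q with l_i − l_j a unit whenever i ≠ j. Let ℤ^{d−1} act on R_d(ℤ_q) with v acting by multiplication by ∏_i(t+l_i)^{v_i}. Then every derivation is principal: for every map δ : ℤ^{d−1} → R_d(ℤ_q) satisfying δ(v + w) = δ(v) + (∏_i(t+l_i)^{v_i})·δ(w) for all v, w ∈ ℤ^{d−1}, there exists A ∈ R_d(ℤ_q) such that δ(v) = (∏_i(t+l_i)^{v_i})·A − A for all v ∈ ℤ^{d−1}. Equivalently, the first group cohomology H^1(ℤ^{d−1}, R_d(ℤ_q)) with this module structure vanishes. 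-/
open Polynomial

/-!
Since `ℤ^(d-1)` is commutative, the derivation rule applied to `v + w = w + v` gives
`(ρ v - 1) δ w = (ρ w - 1) δ v`. Taking the difference of these identities for `w = a` and `w = b`
yields `(ρ v - 1) (δ a - δ b) = (ρ a - ρ b) δ v`, so as soon as `ρ a - ρ b` is a unit,
`A = (ρ a - ρ b)⁻¹ (δ a - δ b)` trivializes `δ`. For the generators `t + l i` and `t + l j` of
`R_d(ℤ_q)` that difference is the unit `l i - l j`.
-/

section Derivation

variable {G R : Type*} [AddCommMagma G] [CommRing R] {ρ δ : G → R}

theorem sub_one_mul_eq_sub_one_mul_of_derivation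
    (hδ : ∀ v w, δ (v + w) = δ v + ρ v * δ w) (v w : G) :
    (ρ v - 1) * δ w = (ρ w - 1) * δ v := by
  linear_combination (hδ v w).symm.trans (add_comm v w ▸ hδ w v)

theorem exists_eq_mul_sub_of_derivation_of_isUnit_sub
    (hδ : ∀ v w, δ (v + w) = δ v + ρ v * δ w) {a b : G} (hab : IsUnit (ρ a - ρ b)) :
    ∃ A, ∀ v, δ v = ρ v * A - A := by
  obtain ⟨u, hu⟩ := hab
  refine ⟨↑u⁻¹ * (δ a - δ b), fun v => ?_⟩
  linear_combination (↑u⁻¹ * δ v) * hu - δ v * u.inv_mul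
    + ↑u⁻¹ * (sub_one_mul_eq_sub_one_mul_of_derivation hδ v b
      - sub_one_mul_eq_sub_one_mul_of_derivation hδ v a)

end Derivation

section Rd

variable {q d : ℕ} {l : Fin (d-1) → ZMod q}

theorem monU_single (i : Fin (d-1)) : monU q d l (Pi.single i 1) = tU q d l i := by
  classical
  rw [monU, Finset.prod_eq_single i (fun j _ hj => by simp [Pi.single_eq_of_ne hj]) (by simp)]
  simp

theorem isUnit_tU_sub_tU {i j : Fin (d-1)} (h : IsUnit (l i - l j)) :
    IsUnit ((tU q d l i : Rd q d l) - tU q d l j) := by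
  have hsub : (tU q d l i : Rd q d l) - tU q d l j
      = algebraMap (Polynomial (ZMod q)) (Rd q d l) (C (l i - l j)) := by
    rw [C_sub, ← add_sub_add_left_eq_sub _ _ X, map_sub]
    rfl
  exact hsub ▸ (h.map C).map _

end Rd

/-- Every derivation `δ : ℤ^(d-1) → R_d(ℤ_q)` (with `v` acting on `R_d(ℤ_q)` by
multiplication by `∏ i (t+l_i)^(v i)`) is principal, i.e. of the form
`δ(v) = (∏ i (t+l_i)^(v i))·A - A` for some `A ∈ R_d(ℤ_q)`; equivalently
`H¹(ℤ^(d-1), R_d(ℤ_q)) = 0` when `d ≥ 3`. -/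
theorem statement12 (q d : ℕ) (hd : 3 ≤ d) (l : Fin (d-1) → ZMod q)
    (hl : ∀ i j : Fin (d-1), i ≠ j → IsUnit (l i - l j))
    (δ : (Fin (d-1) → ℤ) → Rd q d l)
    (hδ : ∀ v w : Fin (d-1) → ℤ,
      δ (v + w) = δ v + (monU q d l v : Rd q d l) * δ w) :
    ∃ A : Rd q d l, ∀ v : Fin (d-1) → ℤ,
      δ v = (monU q d l v : Rd q d l) * A - A := by
  let i₀ : Fin (d-1) := ⟨0, by omega⟩
  let i₁ : Fin (d-1) := ⟨1, by omega⟩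
  have hunit := isUnit_tU_sub_tU (hl i₁ i₀ (by simp [i₀, i₁, Fin.ext_iff]))
  rw [← monU_single, ← monU_single] at hunit
  exact exists_eq_mul_sub_of_derivation_of_isUnit_sub hδ hunit
end
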